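/- arXiv:math/0406103 — 2 statements merged into one kernel-verified Lean document; each statement's English description precedes it below -/
import Mathlib

section
/- With notation as in the paper: let I be a rooted tree with root 0̂, let j_1 ∈ I, x : Î → ℂ, y_1 ∈ ℂ, and v = (v_h)_{h∈Î} ∈ ℂ^Î. For i ∈ I define x_i(v) = Σ_{0̂ < i' ≤ i} x_{i'} ∏_{0̂ < h < i'} v_h and y_1(v) = Σ_{0̂ < i' ≤ j_1} x_{i'} ∏_{0̂ < h < i'} v_h + y_1 ∏_{0̂ < h ≤ j_1} v_h (with analogous 'relative' quantities x_{i;1}(v), y_{1;i}(v), ρ_{i;1}(v) defined by restricting all sums and products to indices above h(i), the largest element h ≤ i with ι_h ≤ j_1). Then for each such i: (y_1(v) − x_i(v))^{-1} ρ_i(v) = (y_{1;i}(v) − x_{i;1}(v))^{-1} ρ_{i;1}(v), whenever both denominators are nonzero. -/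
/- Identity (3.24): `(y₁(v) − x_i(v))⁻¹ ρ_i(v) = (y_{1;i}(v) − x_{i;1}(v))⁻¹ ρ_{i;1}(v)`
for the absolute and relative coordinate/gluing-parameter data on a rooted tree,
where `H i = h(i)` is the largest `h ≤ i` in `Î` with `ι h ≤ j₁`. -/
open Classical in
theorem stmt13 {I : Type*} [Fintype I] [PartialOrder I]
    (hlin : ∀ i1 i2 h : I, i1 < h → i2 < h → i1 ≤ i2 ∨ i2 ≤ i1)
    (r : I) (hr : ∀ i, r ≤ i)
    (ι : I → I) (hι : ∀ h, r < h → ι h < h ∧ ∀ i, i < h → i ≤ ι h)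
    (j1 : I) (x : I → ℂ) (y1 : ℂ) (v : I → ℂ)
    (H : I → I)
    (hH : ∀ i, r < i → (r < H i ∧ H i ≤ i ∧ ι (H i) ≤ j1) ∧
        ∀ h, r < h → h ≤ i → ι h ≤ j1 → h ≤ H i)
    (xv : I → ℂ) (ρ ρ1 x1 y1i : I → ℂ) (yv : ℂ)
    (hxv : ∀ i, xv i = ∑ i' ∈ Finset.univ.filter (fun i' => r < i' ∧ i' ≤ i),
        x i' * ∏ h ∈ Finset.univ.filter (fun h => r < h ∧ h < i'), v h)
    (hyv : yv = (∑ i' ∈ Finset.univ.filter (fun i' => r < i' ∧ i' ≤ j1),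
        x i' * ∏ h ∈ Finset.univ.filter (fun h => r < h ∧ h < i'), v h)
        + y1 * ∏ h ∈ Finset.univ.filter (fun h => r < h ∧ h ≤ j1), v h)
    (hρ : ∀ i, ρ i = ∏ h ∈ Finset.univ.filter (fun h => r < h ∧ h ≤ i), v h)
    (hρ1 : ∀ i, ρ1 i = ∏ h ∈ Finset.univ.filter (fun h => H i ≤ h ∧ h ≤ i), v h)
    (hx1 : ∀ i, x1 i = ∑ i' ∈ Finset.univ.filter (fun i' => H i ≤ i' ∧ i' ≤ i),
        x i' * ∏ h ∈ Finset.univ.filter (fun h => H i ≤ h ∧ h < i'), v h)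
    (hy1i : ∀ i, y1i i = (∑ i' ∈ Finset.univ.filter (fun i' => ι (H i) < i' ∧ i' ≤ j1),
        x i' * ∏ h ∈ Finset.univ.filter (fun h => ι (H i) < h ∧ h < i'), v h)
        + y1 * ∏ h ∈ Finset.univ.filter (fun h => ι (H i) < h ∧ h ≤ j1), v h)
    (i : I) (hi : r < i)
    (hd1 : yv - xv i ≠ 0) (hd2 : y1i i - x1 i ≠ 0) :
    (yv - xv i)⁻¹ * ρ i = (y1i i - x1 i)⁻¹ * ρ1 i := by
  obtain ⟨⟨hrg, hgi, hpj⟩, hmax⟩ := hH i hi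
  obtain ⟨hpg, hlt⟩ := hι (H i) hrg
  set g := H i with hgdef
  set p := ι g with hpdef
  have comp : ∀ a b c : I, a ≤ c → b ≤ c → a ≤ b ∨ b ≤ a := by
    intro a b c hac hbc
    rcases lt_or_eq_of_le hac with hac' | rfl
    · rcases lt_or_eq_of_le hbc with hbc' | rfl
      · exact hlin a b c hac' hbc'
      · exact Or.inl hac
    · exact Or.inr hbc
  have hrp : r ≤ p := hr p
  have hltp : ∀ h : I, h < g ↔ h ≤ p := fun h => ⟨hlt h, fun hh => lt_of_le_of_lt hh hpg⟩
  -- splitting lemmas for the index sets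
  have split1 : ∀ c : I, p < c →
      (Finset.univ.filter (fun h => r < h ∧ h < c)) =
      (Finset.univ.filter (fun h => r < h ∧ h ≤ p)) ∪
        (Finset.univ.filter (fun h => p < h ∧ h < c)) := by
    intro c hc
    ext h
    simp only [Finset.mem_filter, Finset.mem_union, Finset.mem_univ, true_and]
    constructor
    · rintro ⟨h1, h2⟩
      rcases comp h p c h2.le hc.le with hle | hle
      · exact Or.inl ⟨h1, hle⟩
      · rcases lt_or_eq_of_le hle with hlt' | rfl
        · exact Or.inr ⟨hlt', h2⟩
        · exact Or.inl ⟨h1, le_refl _⟩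
    · rintro (⟨h1, h2⟩ | ⟨h1, h2⟩)
      · exact ⟨h1, lt_of_le_of_lt h2 hc⟩
      · exact ⟨lt_of_le_of_lt hrp h1, h2⟩
  have splitg : ∀ c : I, g ≤ c →
      (Finset.univ.filter (fun h => r < h ∧ h < c)) =
      (Finset.univ.filter (fun h => r < h ∧ h ≤ p)) ∪
        (Finset.univ.filter (fun h => g ≤ h ∧ h < c)) := by
    intro c hc
    ext h
    simp only [Finset.mem_filter, Finset.mem_union, Finset.mem_univ, true_and]
    constructor
    · rintro ⟨h1, h2⟩
      rcases comp h g c h2.le hc with hle | hle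
      · rcases lt_or_eq_of_le hle with hlt' | rfl
        · exact Or.inl ⟨h1, (hltp h).1 hlt'⟩
        · exact Or.inr ⟨le_refl _, h2⟩
      · exact Or.inr ⟨hle, h2⟩
    · rintro (⟨h1, h2⟩ | ⟨h1, h2⟩)
      · exact ⟨h1, lt_of_lt_of_le ((hltp h).2 h2) hc⟩
      · exact ⟨lt_of_lt_of_le hrg h1, h2⟩
  have splitgle :
      (Finset.univ.filter (fun h => r < h ∧ h ≤ i)) =
      (Finset.univ.filter (fun h => r < h ∧ h ≤ p)) ∪
        (Finset.univ.filter (fun h => g ≤ h ∧ h ≤ i)) := by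
    ext h
    simp only [Finset.mem_filter, Finset.mem_union, Finset.mem_univ, true_and]
    constructor
    · rintro ⟨h1, h2⟩
      rcases comp h g i h2 hgi with hle | hle
      · rcases lt_or_eq_of_le hle with hlt' | rfl
        · exact Or.inl ⟨h1, (hltp h).1 hlt'⟩
        · exact Or.inr ⟨le_refl _, h2⟩
      · exact Or.inr ⟨hle, h2⟩
    · rintro (⟨h1, h2⟩ | ⟨h1, h2⟩)
      · exact ⟨h1, le_trans h2 (le_trans hpg.le hgi)⟩
      · exact ⟨lt_of_lt_of_le hrg h1, h2⟩
  have splitj :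
      (Finset.univ.filter (fun h => r < h ∧ h ≤ j1)) =
      (Finset.univ.filter (fun h => r < h ∧ h ≤ p)) ∪
        (Finset.univ.filter (fun h => p < h ∧ h ≤ j1)) := by
    ext h
    simp only [Finset.mem_filter, Finset.mem_union, Finset.mem_univ, true_and]
    constructor
    · rintro ⟨h1, h2⟩
      rcases comp h p j1 h2 hpj with hle | hle
      · exact Or.inl ⟨h1, hle⟩
      · rcases lt_or_eq_of_le hle with hlt' | rfl
        · exact Or.inr ⟨hlt', h2⟩
        · exact Or.inl ⟨h1, le_refl _⟩
    · rintro (⟨h1, h2⟩ | ⟨h1, h2⟩)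
      · exact ⟨h1, le_trans h2 hpj⟩
      · exact ⟨lt_of_le_of_lt hrp h1, h2⟩
  -- disjointness
  have hdisj1 : ∀ d : I → Prop,
      Disjoint (Finset.univ.filter (fun h => r < h ∧ h ≤ p))
        (Finset.univ.filter (fun h => p < h ∧ d h)) := by
    intro d
    rw [Finset.disjoint_left]
    intro a ha hb
    simp only [Finset.mem_filter, Finset.mem_univ, true_and] at ha hb
    exact absurd ha.2 (not_le_of_gt hb.1)
  have hdisj2 : ∀ d : I → Prop,
      Disjoint (Finset.univ.filter (fun h => r < h ∧ h ≤ p))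
        (Finset.univ.filter (fun h => g ≤ h ∧ d h)) := by
    intro d
    rw [Finset.disjoint_left]
    intro a ha hb
    simp only [Finset.mem_filter, Finset.mem_univ, true_and] at ha hb
    exact absurd (le_trans hb.1 ha.2) (not_le_of_gt hpg)
  -- termwise rewriting
  have hAterm : ∀ i' ∈ Finset.univ.filter (fun i' => p < i' ∧ i' ≤ j1),
      x i' * ∏ h ∈ Finset.univ.filter (fun h => r < h ∧ h < i'), v h
      = (∏ h ∈ Finset.univ.filter (fun h => r < h ∧ h ≤ p), v h) *
        (x i' * ∏ h ∈ Finset.univ.filter (fun h => p < h ∧ h < i'), v h) := by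
    intro i' hi'
    simp only [Finset.mem_filter, Finset.mem_univ, true_and] at hi'
    rw [split1 i' hi'.1, Finset.prod_union (hdisj1 _)]
    ring
  have hBterm : ∀ i' ∈ Finset.univ.filter (fun i' => g ≤ i' ∧ i' ≤ i),
      x i' * ∏ h ∈ Finset.univ.filter (fun h => r < h ∧ h < i'), v h
      = (∏ h ∈ Finset.univ.filter (fun h => r < h ∧ h ≤ p), v h) *
        (x i' * ∏ h ∈ Finset.univ.filter (fun h => g ≤ h ∧ h < i'), v h) := by
    intro i' hi'
    simp only [Finset.mem_filter, Finset.mem_univ, true_and] at hi'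
    rw [splitg i' hi'.1, Finset.prod_union (hdisj2 _)]
    ring
  -- the two key factorizations
  have key1 : yv - xv i =
      (∏ h ∈ Finset.univ.filter (fun h => r < h ∧ h ≤ p), v h) * (y1i i - x1 i) := by
    rw [hyv, hxv i, hy1i i, hx1 i]
    rw [splitj, Finset.sum_union (hdisj1 _), Finset.prod_union (hdisj1 _),
      splitgle, Finset.sum_union (hdisj2 _),
      Finset.sum_congr rfl hAterm, Finset.sum_congr rfl hBterm,
      ← Finset.mul_sum, ← Finset.mul_sum]
    ring
  have keyρ : ρ i =
      (∏ h ∈ Finset.univ.filter (fun h => r < h ∧ h ≤ p), v h) * ρ1 i := by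
    rw [hρ i, hρ1 i, splitgle, Finset.prod_union (hdisj2 _)]
  have hQ : (∏ h ∈ Finset.univ.filter (fun h => r < h ∧ h ≤ p), v h) ≠ 0 := by
    intro h0
    exact hd1 (by rw [key1, h0, zero_mul])
  rw [key1, keyρ, mul_inv]
  have hcalc : (∏ h ∈ Finset.univ.filter (fun h => r < h ∧ h ≤ p), v h)⁻¹ *
      (y1i i - x1 i)⁻¹ *
      ((∏ h ∈ Finset.univ.filter (fun h => r < h ∧ h ≤ p), v h) * ρ1 i)
      = (y1i i - x1 i)⁻¹ * ρ1 i *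
        ((∏ h ∈ Finset.univ.filter (fun h => r < h ∧ h ≤ p), v h)⁻¹ *
          (∏ h ∈ Finset.univ.filter (fun h => r < h ∧ h ≤ p), v h)) := by ring
  rw [hcalc, inv_mul_cancel₀ hQ, mul_one]
end

section
/- Let H be a Banach space, D : H → K a bounded surjective linear operator between Banach spaces with bounded right inverse of norm ≤ C, and N : H → K a map with N(0) = 0 and ‖N(ξ) − N(ξ')‖ ≤ C(‖ξ‖ + ‖ξ'‖)‖ξ − ξ'‖ for ‖ξ‖, ‖ξ'‖ ≤ δ. If e ∈ K satisfies ‖e‖ ≤ min(δ/(8C), 1/(32 C^3)), then the equation e + Dζ + N(ζ) = 0 has a unique solution ζ in a suitable closed subspace complementary to ker D with ‖ζ‖ ≤ 2C‖e‖. -/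
/- Quantitative contraction principle: for `D` surjective with right inverse `Q` of
norm `≤ C` and a quadratic perturbation `N`, the equation `e + Dζ + N(ζ) = 0` has a
unique small solution `ζ` in the complement `range Q` of `ker D`, with
`‖ζ‖ ≤ 2C‖e‖`, provided `‖e‖ ≤ min(δ/(8C), 1/(32C³))`. -/
theorem stmt16 {H K : Type*}
    [NormedAddCommGroup H] [NormedSpace ℝ H] [CompleteSpace H]
    [NormedAddCommGroup K] [NormedSpace ℝ K] [CompleteSpace K]
    (D : H →L[ℝ] K) (Q : K →L[ℝ] H) (hQ : ∀ y, D (Q y) = y)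
    (C δ : ℝ) (hC : 0 < C) (hδ : 0 < δ) (hQn : ‖Q‖ ≤ C)
    (N : H → K) (hN0 : N 0 = 0)
    (hN : ∀ ξ ξ' : H, ‖ξ‖ ≤ δ → ‖ξ'‖ ≤ δ →
      ‖N ξ - N ξ'‖ ≤ C * (‖ξ‖ + ‖ξ'‖) * ‖ξ - ξ'‖)
    (e : K) (he : ‖e‖ ≤ min (δ / (8 * C)) (1 / (32 * C ^ 3))) :
    ∃! ζ : H, (∃ y : K, Q y = ζ) ∧ ‖ζ‖ ≤ 2 * C * ‖e‖ ∧ e + D ζ + N ζ = 0 := by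
  have he0 : (0:ℝ) ≤ ‖e‖ := norm_nonneg e
  have he1 : ‖e‖ * (8 * C) ≤ δ :=
    (le_div_iff₀ (by positivity)).mp (le_trans he (min_le_left _ _))
  have he2 : ‖e‖ * (32 * C ^ 3) ≤ 1 :=
    (le_div_iff₀ (by positivity)).mp (le_trans he (min_le_right _ _))
  have hCe : 2 * C * ‖e‖ ≤ δ := by nlinarith
  -- bound on N
  have hNb : ∀ ξ : H, ‖ξ‖ ≤ δ → ‖N ξ‖ ≤ C * ‖ξ‖ ^ 2 := by
    intro ξ hξ
    have h := hN ξ 0 hξ (by simpa using le_of_lt hδ)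
    simp only [hN0, sub_zero, norm_zero, add_zero] at h
    calc ‖N ξ‖ ≤ C * ‖ξ‖ * ‖ξ‖ := h
      _ = C * ‖ξ‖ ^ 2 := by ring
  set f : K → K := fun y => -e - N (Q y) with hf
  -- Q maps the ball into the small ball
  have hQb : ∀ y : K, ‖y‖ ≤ 2 * ‖e‖ → ‖Q y‖ ≤ 2 * C * ‖e‖ := by
    intro y hy
    calc ‖Q y‖ ≤ ‖Q‖ * ‖y‖ := Q.le_opNorm y
      _ ≤ C * (2 * ‖e‖) := by
          apply mul_le_mul hQn hy (norm_nonneg y) (le_of_lt hC)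
      _ = 2 * C * ‖e‖ := by ring
  -- f maps the ball to itself
  have hmaps : ∀ y : K, ‖y‖ ≤ 2 * ‖e‖ → ‖f y‖ ≤ 2 * ‖e‖ := by
    intro y hy
    have h1 : ‖Q y‖ ≤ 2 * C * ‖e‖ := hQb y hy
    have h2 : ‖N (Q y)‖ ≤ C * ‖Q y‖ ^ 2 := hNb _ (le_trans h1 hCe)
    have h3 : C * ‖Q y‖ ^ 2 ≤ C * (2 * C * ‖e‖) ^ 2 := by
      have hsq := mul_self_le_mul_self (norm_nonneg (Q y)) h1
      nlinarith
    have h4 : ‖f y‖ ≤ ‖e‖ + ‖N (Q y)‖ := by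
      simpa [hf, norm_neg] using norm_sub_le (-e) (N (Q y))
    nlinarith
  -- f is a contraction on the ball
  have hLip : ∀ y y' : K, ‖y‖ ≤ 2 * ‖e‖ → ‖y'‖ ≤ 2 * ‖e‖ →
      ‖f y - f y'‖ ≤ (1/2) * ‖y - y'‖ := by
    intro y y' hy hy'
    have h1 : ‖Q y‖ ≤ 2 * C * ‖e‖ := hQb y hy
    have h1' : ‖Q y'‖ ≤ 2 * C * ‖e‖ := hQb y' hy'
    have h2 : ‖f y - f y'‖ = ‖N (Q y) - N (Q y')‖ := by
      simp only [hf]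
      rw [show -e - N (Q y) - (-e - N (Q y')) = -(N (Q y) - N (Q y')) by abel,
        norm_neg]
    have h3 := hN (Q y) (Q y') (le_trans h1 hCe) (le_trans h1' hCe)
    have h4 : ‖Q y - Q y'‖ ≤ C * ‖y - y'‖ := by
      calc ‖Q y - Q y'‖ = ‖Q (y - y')‖ := by rw [map_sub]
        _ ≤ ‖Q‖ * ‖y - y'‖ := Q.le_opNorm _
        _ ≤ C * ‖y - y'‖ := by
            apply mul_le_mul_of_nonneg_right hQn (norm_nonneg _)
    rw [h2]
    have hnn := norm_nonneg (Q y - Q y')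
    have hnn2 := norm_nonneg (y - y')
    have hnn3 := norm_nonneg (Q y)
    have hnn4 := norm_nonneg (Q y')
    have hs1 : ‖Q y‖ + ‖Q y'‖ ≤ 4 * C * ‖e‖ := by linarith
    have hs2 : (‖Q y‖ + ‖Q y'‖) * ‖Q y - Q y'‖ ≤ (4 * C * ‖e‖) * (C * ‖y - y'‖) :=
      mul_le_mul hs1 h4 hnn (by positivity)
    have hs3 : C * ((‖Q y‖ + ‖Q y'‖) * ‖Q y - Q y'‖) ≤
        C * ((4 * C * ‖e‖) * (C * ‖y - y'‖)) :=
      mul_le_mul_of_nonneg_left hs2 hC.le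
    have hs4 : 4 * C ^ 3 * ‖e‖ ≤ 1 / 8 := by nlinarith
    nlinarith [mul_le_mul_of_nonneg_right hs4 hnn2]
  -- set up the fixed point on the closed ball
  set s : Set K := Metric.closedBall 0 (2 * ‖e‖) with hs
  have hmem : ∀ y : K, y ∈ s ↔ ‖y‖ ≤ 2 * ‖e‖ := by
    intro y; simp [hs, Metric.mem_closedBall, dist_zero_right]
  haveI : CompleteSpace s := Metric.isClosed_closedBall.completeSpace_coe
  haveI : Nonempty s := ⟨⟨0, (hmem 0).mpr (by simpa using by positivity)⟩⟩
  set g : s → s := fun y => ⟨f y, (hmem _).mpr (hmaps y ((hmem y).mp y.2))⟩ with hg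
  have hcontr : ContractingWith (1/2 : NNReal) g := by
    constructor
    · rw [← NNReal.coe_lt_coe]; norm_num
    · apply LipschitzWith.of_dist_le_mul
      intro x y
      have := hLip x y ((hmem x).mp x.2) ((hmem y).mp y.2)
      simp only [hg, Subtype.dist_eq, dist_eq_norm]
      push_cast
      simpa using this
  set y₀ : s := hcontr.fixedPoint g with hy₀
  have hfix : g y₀ = y₀ := hcontr.fixedPoint_isFixedPt
  have hfixv : f (y₀ : K) = (y₀ : K) := congrArg Subtype.val hfix
  refine ⟨Q y₀, ⟨⟨y₀, rfl⟩, hQb _ ((hmem _).mp y₀.2), ?_⟩, ?_⟩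
  · rw [hQ]
    nth_rewrite 1 [← hfixv]
    simp only [hf]
    abel
  · rintro ζ' ⟨⟨y', rfl⟩, hζn, hζeq⟩
    have hDy' : D (Q y') = y' := hQ _
    have hy'eq : y' = -e - N (Q y') := by
      rw [hDy'] at hζeq
      have h2 : y' + (e + N (Q y')) = 0 := by rw [← hζeq]; abel
      have h3 := eq_neg_of_add_eq_zero_left h2
      exact h3.trans (by abel)
    have hζδ : ‖Q y'‖ ≤ δ := le_trans hζn hCe
    have hNζ : ‖N (Q y')‖ ≤ C * ‖Q y'‖ ^ 2 := hNb _ hζδ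
    have hC2 : C * ‖Q y'‖ ^ 2 ≤ C * (2 * C * ‖e‖) ^ 2 := by
      have hsq := mul_self_le_mul_self (norm_nonneg (Q y')) hζn
      nlinarith
    have hy'n : ‖y'‖ ≤ 2 * ‖e‖ := by
      have h4 : ‖y'‖ ≤ ‖e‖ + ‖N (Q y')‖ := by
        calc ‖y'‖ = ‖-e - N (Q y')‖ := congrArg norm hy'eq
          _ ≤ ‖-e‖ + ‖N (Q y')‖ := norm_sub_le _ _
          _ = ‖e‖ + ‖N (Q y')‖ := by rw [norm_neg]
      linarith only [h4, hNζ, hC2, he0, mul_le_mul_of_nonneg_right he2 he0]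
    have hy's : y' ∈ s := (hmem y').mpr hy'n
    have hfixpt : Function.IsFixedPt g ⟨y', hy's⟩ := by
      apply Subtype.ext
      show f y' = y'
      simp only [hf]
      exact hy'eq.symm
    have : (⟨y', hy's⟩ : s) = y₀ := hcontr.fixedPoint_unique hfixpt
    rw [show y' = (y₀ : K) from congrArg Subtype.val this]
end
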